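/- Let q be a prime power, let A ⊆ 𝔽_q be nonempty, and let P ∈ 𝔽_q[x_1, …, x_n] be a nonzero polynomial of degree d. Then Σ_{a ∈ A^n} mult(P, a) ≤ d · |A|^{n−1}. -/

import Mathlib

/-- The `β`-th Hasse derivative of a multivariate polynomial `f`: the coefficient of
`y^β` in `f(x + y)`, as a polynomial in `x`. -/
noncomputable def hasseDeriv {m : ℕ} {F : Type*} [CommRing F]
    (β : Fin m →₀ ℕ) (f : MvPolynomial (Fin m) F) : MvPolynomial (Fin m) F :=
  MvPolynomial.coeff β
    (MvPolynomial.eval₂ (MvPolynomial.C.comp MvPolynomial.C)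
      (fun i => MvPolynomial.C (MvPolynomial.X i) + MvPolynomial.X i) f)

/-- The multiplicity of `f` at the point `a`: the supremum of all `M ∈ ℤ_{≥0}` such that
`f^{(β)}(a) = 0` for all `β` with `|β| < M`. -/
noncomputable def polyMult {m : ℕ} {F : Type*} [CommRing F]
    (f : MvPolynomial (Fin m) F) (a : Fin m → F) : ℕ∞ :=
  ⨆ M ∈ {M : ℕ | ∀ β : Fin m →₀ ℕ, (∑ i, β i) < M →
    MvPolynomial.eval a (hasseDeriv β f) = 0}, (M : ℕ∞)

/-!
Shifting `a` to the origin, `polyMult f a` is the lowest total degree of a monomial of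
`f (a + X)`. Write `P = ∑_{j ≤ t} P_j(x') x₀^j` with `P_t ≠ 0`, and fix `a` and a monomial `x'^β`
of lowest degree in `P_t (a + x')`. The `x'^β`-coefficients of the `P_j (a + x')` form a nonzero
univariate polynomial `u` of degree `≤ t`, and the coefficient of `x₀^r x'^β` in
`P ((b, a) + X)` is the `r`-th Taylor coefficient of `u` at `b`; taking `r` the multiplicity
of `b` as a root of `u` gives `mult(P, (b, a)) ≤ mult(P_t, a) + mult(u, b)`. Since `u` has at
most `t` roots, summing over `b ∈ A` and then over `a ∈ A^{n-1}` (by induction, with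
`deg P_t ≤ d - t`) gives `|A| · ∑ mult(P, ·) ≤ d · |A|^n`.
-/

namespace Polynomial

section mapLinear

variable {R S : Type*} [CommSemiring R] [Semiring S] [Algebra R S]

noncomputable def mapLinear (f : S →ₗ[R] R) : S[X] →ₗ[R] R[X] :=
  lsum fun j => (monomial j).comp f

@[simp]
theorem mapLinear_monomial (f : S →ₗ[R] R) (j : ℕ) (c : S) :
    mapLinear f (monomial j c) = monomial j (f c) := by
  simp [mapLinear]

@[simp]
theorem coeff_mapLinear (f : S →ₗ[R] R) (W : S[X]) (j : ℕ) :
    (mapLinear f W).coeff j = f (W.coeff j) := by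
  induction W using Polynomial.induction_on' with
  | add p q hp hq => simp only [map_add, coeff_add, hp, hq]
  | monomial i c => by_cases h : i = j <;> simp [coeff_monomial, h]

theorem natDegree_mapLinear_le (f : S →ₗ[R] R) (W : S[X]) :
    (mapLinear f W).natDegree ≤ W.natDegree :=
  natDegree_le_iff_coeff_eq_zero.2 fun j hj => by
    rw [coeff_mapLinear, coeff_eq_zero_of_natDegree_lt hj, map_zero]

theorem taylor_mapLinear (f : S →ₗ[R] R) (W : S[X]) (b : R) :
    taylor b (mapLinear f W) = mapLinear f (taylor (algebraMap R S b) W) := by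
  induction W using Polynomial.induction_on' with
  | add p q hp hq => simp only [map_add, hp, hq]
  | monomial j c =>
    ext r
    have hscalar : algebraMap R S b ^ (j - r) * (j.choose r : S) =
        algebraMap R S (b ^ (j - r) * j.choose r) := by simp
    simp only [mapLinear_monomial, taylor_monomial, coeff_C_mul, coeff_X_add_C_pow,
      coeff_mapLinear, hscalar, ← Algebra.commutes, ← Algebra.smul_def, map_smul, smul_eq_mul]
    ring

end mapLinear

variable {R : Type*} [CommRing R]

theorem coeff_taylor_rootMultiplicity_ne_zero {u : R[X]} (hu : u ≠ 0) (b : R) :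
    (taylor b u).coeff (u.rootMultiplicity b) ≠ 0 := by
  rw [rootMultiplicity_eq_natTrailingDegree, ← taylor_apply]
  exact trailingCoeff_nonzero_iff_nonzero.2 (mt (taylor_eq_zero b u).1 hu)

theorem sum_rootMultiplicity_le_natDegree [IsDomain R] (u : R[X]) (A : Finset R) :
    ∑ b ∈ A, u.rootMultiplicity b ≤ u.natDegree := by
  classical
  calc ∑ b ∈ A, u.rootMultiplicity b = ∑ b ∈ A, u.roots.count b := by simp only [count_roots]
    _ ≤ ∑ b ∈ A ∪ u.roots.toFinset, u.roots.count b :=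
      Finset.sum_le_sum_of_subset Finset.subset_union_left
    _ = Multiset.card u.roots := Multiset.sum_count_eq_card fun b hb => by simp [hb]
    _ ≤ u.natDegree := card_roots' u

end Polynomial

namespace MvPolynomial

variable {σ : Type*}

section CommSemiring

variable {R : Type*} [CommSemiring R]

noncomputable def taylor (a : σ → R) : MvPolynomial σ R →ₐ[R] MvPolynomial σ R :=
  aeval fun i => C (a i) + X i

@[simp]
theorem taylor_X (a : σ → R) (i : σ) : taylor a (X i) = C (a i) + X i :=
  aeval_X _ i

theorem finSuccEquiv_taylor_cons {n : ℕ} (b : R) (a : Fin n → R)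
    (P : MvPolynomial (Fin (n + 1)) R) :
    finSuccEquiv R n (taylor (Fin.cons b a) P) =
      Polynomial.taylor (C b) ((finSuccEquiv R n P).map (taylor a : _ →+* MvPolynomial _ R)) := by
  have h : (Polynomial.taylorAlgHom (C b)).toRingHom.comp
      ((Polynomial.mapRingHom (taylor a : _ →+* MvPolynomial (Fin n) R)).comp
        (finSuccEquiv R n).toRingHom) =
      (finSuccEquiv R n).toRingHom.comp (taylor (Fin.cons b a)).toRingHom :=
    ringHom_ext (fun r => by simp [finSuccEquiv_apply])
      (Fin.cases (by simp [finSuccEquiv_apply, add_comm]) fun k => by simp [finSuccEquiv_apply])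
  exact (RingHom.congr_fun h P).symm

end CommSemiring

section CommRing

variable {R : Type*} [CommRing R]

theorem taylor_neg_taylor (a : σ → R) (f : MvPolynomial σ R) :
    taylor (-a) (taylor a f) = f := by
  rw [← AlgHom.comp_apply, show (taylor (-a)).comp (taylor a) = AlgHom.id R _ from
    algHom_ext fun i => by simp, AlgHom.id_apply]

theorem taylor_injective (a : σ → R) :
    Function.Injective (taylor a) :=
  Function.LeftInverse.injective (taylor_neg_taylor a)

end CommRing

end MvPolynomial

theorem Fintype.sum_piFinset_const_succ {α M : Type*} [AddCommMonoid M] {n : ℕ}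
    (A : Finset α) (g : (Fin (n + 1) → α) → M) :
    ∑ x ∈ piFinset fun _ => A, g x =
      ∑ a ∈ piFinset fun _ : Fin n => A, ∑ b ∈ A, g (Fin.cons b a) := by
  have h := Finset.filter_piFinset_eq_map_consEquiv (fun _ : Fin (n + 1) => A) fun _ => True
  simp only [Finset.filter_true] at h
  rw [h, Finset.sum_map, Finset.sum_product, Finset.sum_comm]
  rfl

open MvPolynomial Finset

section CommRing

variable {R : Type*} [CommRing R]

theorem eval_hasseDeriv {m : ℕ} (a : Fin m → R) (β : Fin m →₀ ℕ) (f : MvPolynomial (Fin m) R) :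
    eval a (hasseDeriv β f) = coeff β (taylor a f) := by
  rw [hasseDeriv, ← coeff_map, ← coe_eval₂Hom, ← RingHom.comp_apply]
  congr 2
  ext <;> simp [taylor]

theorem polyMult_eq_order {m : ℕ} (f : MvPolynomial (Fin m) R) (a : Fin m → R) :
    polyMult f a = (taylor a f : MvPowerSeries (Fin m) R).order := by
  have key (M : ℕ) : (∀ β : Fin m →₀ ℕ, (∑ i, β i) < M → eval a (hasseDeriv β f) = 0) ↔
      (M : ℕ∞) ≤ (taylor a f : MvPowerSeries (Fin m) R).order := by
    simp only [eval_hasseDeriv, ← Finsupp.degree_eq_sum, ← coeff_coe]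
    refine ⟨MvPowerSeries.nat_le_order, fun h β hβ => MvPowerSeries.coeff_of_lt_order ?_⟩
    exact (Nat.cast_lt.2 hβ).trans_le h
  simp only [polyMult, key, Set.mem_ofPred_eq]
  exact le_antisymm (iSup₂_le fun _ h => h)
    (ENat.forall_natCast_le_iff_le.1 fun M hM => le_iSup₂_of_le M hM le_rfl)

theorem coe_taylor_ne_zero {m : ℕ} {f : MvPolynomial (Fin m) R} (hf : f ≠ 0) (a : Fin m → R) :
    (taylor a f : MvPowerSeries (Fin m) R) ≠ 0 := by
  rwa [Ne, coe_eq_zero_iff, map_eq_zero_iff _ (taylor_injective a)]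

theorem polyMult_fin_zero {f : MvPolynomial (Fin 0) R} (hf : f ≠ 0) (a : Fin 0 → R) :
    polyMult f a = 0 := by
  obtain ⟨β, -, hβ⟩ := MvPowerSeries.exists_coeff_ne_zero_and_order
    (MvPowerSeries.ne_zero_iff_order_finite.1 (coe_taylor_ne_zero hf a))
  rw [polyMult_eq_order, ← hβ, Subsingleton.elim β 0, map_zero, Nat.cast_zero]

variable {n : ℕ}

theorem exists_polyMult_cons_le {P : MvPolynomial (Fin (n + 1)) R} (hP : P ≠ 0)
    (a : Fin n → R) :
    ∃ u : Polynomial R, u.natDegree ≤ (finSuccEquiv R n P).natDegree ∧ ∀ b,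
      polyMult P (Fin.cons b a) ≤
        polyMult (finSuccEquiv R n P).leadingCoeff a + u.rootMultiplicity b := by
  set Q := finSuccEquiv R n P
  have hQ : Q.leadingCoeff ≠ 0 := by simpa [Q] using hP
  obtain ⟨β, hβ, hβ_deg⟩ := MvPowerSeries.exists_coeff_ne_zero_and_order
    (MvPowerSeries.ne_zero_iff_order_finite.1 (coe_taylor_ne_zero hQ a))
  rw [coeff_coe] at hβ
  set u := Polynomial.mapLinear (lcoeff R β) (Q.map (taylor a : _ →+* MvPolynomial (Fin n) R))
  have hu : u ≠ 0 := by
    intro hu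
    apply hβ
    simpa [u, Polynomial.coeff_map] using congrArg (Polynomial.coeff · Q.natDegree) hu
  refine ⟨u, (Polynomial.natDegree_mapLinear_le _ _).trans Polynomial.natDegree_map_le,
    fun b => ?_⟩
  have hc : coeff (Finsupp.cons (u.rootMultiplicity b) β) (taylor (Fin.cons b a) P) ≠ 0 := by
    rw [← finSuccEquiv_coeff_coeff, finSuccEquiv_taylor_cons, ← lcoeff_apply,
      ← Polynomial.coeff_mapLinear, ← algebraMap_eq, ← Polynomial.taylor_mapLinear]
    exact Polynomial.coeff_taylor_rootMultiplicity_ne_zero hu b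
  rw [polyMult_eq_order, polyMult_eq_order, ← hβ_deg]
  calc _ ≤ ((Finsupp.cons (u.rootMultiplicity b) β).degree : ℕ∞) :=
        MvPowerSeries.order_le (by rwa [coeff_coe])
    _ = _ := by simp [Finsupp.degree_eq_sum, Fin.sum_univ_succ, add_comm]

theorem sum_polyMult_cons_le [IsDomain R] {P : MvPolynomial (Fin (n + 1)) R} (hP : P ≠ 0)
    (A : Finset R) (a : Fin n → R) :
    ∑ b ∈ A, polyMult P (Fin.cons b a) ≤
      #A * polyMult (finSuccEquiv R n P).leadingCoeff a + (finSuccEquiv R n P).natDegree := by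
  obtain ⟨u, hu_deg, hle⟩ := exists_polyMult_cons_le hP a
  calc ∑ b ∈ A, polyMult P (Fin.cons b a)
      ≤ ∑ b ∈ A, (polyMult (finSuccEquiv R n P).leadingCoeff a + u.rootMultiplicity b) :=
        sum_le_sum fun b _ => hle b
    _ = #A * polyMult (finSuccEquiv R n P).leadingCoeff a +
          ↑(∑ b ∈ A, u.rootMultiplicity b) := by
        rw [sum_add_distrib, sum_const, nsmul_eq_mul, Nat.cast_sum]
    _ ≤ _ := by
        gcongr
        exact_mod_cast (Polynomial.sum_rootMultiplicity_le_natDegree u A).trans hu_deg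

theorem card_mul_sum_polyMult_le [IsDomain R] (A : Finset R) :
    ∀ {n : ℕ} {P : MvPolynomial (Fin n) R}, P ≠ 0 →
      #A * ∑ a ∈ Fintype.piFinset fun _ => A, polyMult P a ≤ P.totalDegree * #A ^ n
  | 0, P, hP => by simp [polyMult_fin_zero hP]
  | n + 1, P, hP => by
    set Q := finSuccEquiv R n P
    have hQ : Q.leadingCoeff ≠ 0 := by simpa [Q] using hP
    have hdeg : Q.leadingCoeff.totalDegree + Q.natDegree ≤ P.totalDegree :=
      totalDegree_coeff_finSuccEquiv_add_le P _ hQ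
    calc #A * ∑ x ∈ Fintype.piFinset fun _ => A, polyMult P x
        = #A * ∑ a ∈ Fintype.piFinset fun _ : Fin n => A,
            ∑ b ∈ A, polyMult P (Fin.cons b a) := by
          rw [Fintype.sum_piFinset_const_succ]
      _ ≤ #A * ∑ a ∈ Fintype.piFinset fun _ : Fin n => A,
            (#A * polyMult Q.leadingCoeff a + Q.natDegree) := by
          gcongr with a
          exact sum_polyMult_cons_le hP A a
      _ = #A * (#A * ∑ a ∈ Fintype.piFinset fun _ : Fin n => A, polyMult Q.leadingCoeff a)
            + Q.natDegree * #A ^ (n + 1) := by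
          rw [sum_add_distrib, ← mul_sum, sum_const, Fintype.card_piFinset_const, nsmul_eq_mul]
          push_cast
          ring
      _ ≤ #A * (Q.leadingCoeff.totalDegree * #A ^ n) + Q.natDegree * #A ^ (n + 1) := by
          gcongr #A * ?_ + _
          exact card_mul_sum_polyMult_le A hQ
      _ = ↑(Q.leadingCoeff.totalDegree + Q.natDegree) * #A ^ (n + 1) := by
          push_cast
          ring
      _ ≤ P.totalDegree * #A ^ (n + 1) := by
          gcongr

end CommRing

theorem sum_polyMult_le_general {F : Type*} [Field F]
    (n d : ℕ)
    (A : Finset F) (hA : A.Nonempty)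
    (P : MvPolynomial (Fin n) F) (hP : P ≠ 0) (hd : P.totalDegree = d) :
    ∑ a ∈ Fintype.piFinset (fun _ : Fin n => A), polyMult P a ≤
      ((d * A.card ^ (n - 1) : ℕ) : ℕ∞) := by
  subst hd
  cases n with
  | zero => simp [polyMult_fin_zero hP]
  | succ n =>
    have h := card_mul_sum_polyMult_le A hP
    rw [pow_succ', mul_left_comm] at h
    push_cast
    exact (ENat.mul_le_mul_left_iff (by simpa using hA.ne_empty) (ENat.natCast_ne_top _)).1 h

/-- Multiplicity-enhanced Schwartz–Zippel: for a nonzero polynomial `P` of degree `d`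
and nonempty `A ⊆ 𝔽_q`, `Σ_{a ∈ A^n} mult(P, a) ≤ d · |A|^{n-1}`. -/
theorem sum_polyMult_le {F : Type*} [Field F] [Fintype F] [DecidableEq F]
    (q n d : ℕ) (hq : IsPrimePow q) (hcard : Fintype.card F = q)
    (A : Finset F) (hA : A.Nonempty)
    (P : MvPolynomial (Fin n) F) (hP : P ≠ 0) (hd : P.totalDegree = d) :
    ∑ a ∈ Fintype.piFinset (fun _ : Fin n => A), polyMult P a ≤
      ((d * A.card ^ (n - 1) : ℕ) : ℕ∞) :=
  sum_polyMult_le_general n d A hA P hP hd
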